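/- arXiv:2602.15239 — 2 statements merged into one kernel-verified Lean document; each statement's English description precedes it below -/
import Mathlib

section
/- Let μ be a Borel probability measure on X, let x_1, …, x_N ∈ X, and let V_1, …, V_N be pairwise disjoint Borel sets whose union is X, with V_j contained in the closed ball of radius r > 0 centered at x_j and μ(V_j) = 1/N for every j. Let M ≥ 0 satisfy |⟨Q f(u), K f(v)⟩| ≤ M for all u, v ∈ X. Then for every index i, the finite clean attention output Φ̄(i) and the continuous attention output Φ_M(x_i) satisfy ‖Φ̄(i) − Φ_M(x_i)‖ ≤ (exp(M)·C_V + 2·exp(2M)·B_f²·C_Q·C_K·C_V) · r. -/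
open MeasureTheory
open scoped RealInnerProductSpace BigOperators

/-!
Since every cell `P j` has mass `1/N` and lies within `r` of `x j`, the normalised sums
`(1/N) ∑ g (x j)` and `(1/N) ∑ g (x j) • V (f (x j))` are Riemann sums of `∫ g` and `∫ g • V ∘ f`,
with errors bounded by the oscillation of the integrands on the cells: `C_V r` for `V ∘ f` and
`exp M · C_Q B_f · C_K r` for the softmax weight `g`, because `exp` is `exp M`-Lipschitz below `M`.
Comparing the ratios `a / s` and `b / t` costs `(‖a - b‖ + |s - t| ‖b‖ / t) / s`, where
`‖b‖ / t ≤ C_V B_f` and `1 / s ≤ exp M` as the weights are at least `exp (-M)`.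
-/

lemma abs_exp_sub_exp_le_of_le {a b M : ℝ} (ha : a ≤ M) (hb : b ≤ M) :
    |Real.exp a - Real.exp b| ≤ Real.exp M * |a - b| := by
  wlog hba : b ≤ a generalizing a b
  · rw [abs_sub_comm, abs_sub_comm a]
    exact this hb ha (le_of_not_ge hba)
  rw [abs_of_nonneg (sub_nonneg.2 (Real.exp_le_exp.2 hba)), abs_of_nonneg (sub_nonneg.2 hba)]
  calc Real.exp a - Real.exp b = Real.exp a * (1 - Real.exp (b - a)) := by
        rw [mul_sub, ← Real.exp_add]; ring_nf
    _ ≤ Real.exp M * (a - b) :=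
        mul_le_mul (Real.exp_le_exp.2 ha) (by linarith [Real.add_one_le_exp (b - a)])
          (sub_nonneg.2 (Real.exp_le_one_iff.2 (by linarith))) (Real.exp_pos M).le

lemma abs_exp_inner_sub_exp_inner_le {E : Type*} [NormedAddCommGroup E] [InnerProductSpace ℝ E]
    {q k k' : E} {M : ℝ} (hk : |⟪q, k⟫| ≤ M) (hk' : |⟪q, k'⟫| ≤ M) :
    |Real.exp ⟪q, k⟫ - Real.exp ⟪q, k'⟫| ≤ Real.exp M * (‖q‖ * ‖k - k'‖) := by
  refine (abs_exp_sub_exp_le_of_le (le_of_abs_le hk) (le_of_abs_le hk')).trans ?_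
  rw [← inner_sub_right]
  gcongr
  exact abs_real_inner_le_norm _ _

lemma norm_smul_sub_smul_le {E : Type*} [NormedAddCommGroup E] [NormedSpace ℝ E]
    {c : ℝ} (hc : 0 ≤ c) (c' : ℝ) (v v' : E) :
    ‖c • v - c' • v'‖ ≤ c * ‖v - v'‖ + |c - c'| * ‖v'‖ := by
  calc ‖c • v - c' • v'‖ = ‖c • (v - v') + (c - c') • v'‖ := by congr 1; module
    _ ≤ c * ‖v - v'‖ + |c - c'| * ‖v'‖ := by
        refine (norm_add_le _ _).trans_eq ?_
        rw [norm_smul, norm_smul, Real.norm_of_nonneg hc, Real.norm_eq_abs]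

lemma norm_inv_smul_sub_inv_smul_le {E : Type*} [NormedAddCommGroup E] [NormedSpace ℝ E]
    {s t : ℝ} (hs : 0 < s) (ht : 0 < t) (a b : E) :
    ‖s⁻¹ • a - t⁻¹ • b‖ ≤ s⁻¹ * (‖a - b‖ + |s - t| * (t⁻¹ * ‖b‖)) := by
  have hinv : |s⁻¹ - t⁻¹| = s⁻¹ * (|s - t| * t⁻¹) := by
    rw [inv_sub_inv hs.ne' ht.ne', abs_div, abs_sub_comm, abs_of_pos (mul_pos hs ht)]
    field_simp
  calc ‖s⁻¹ • a - t⁻¹ • b‖ ≤ s⁻¹ * ‖a - b‖ + |s⁻¹ - t⁻¹| * ‖b‖ :=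
        norm_smul_sub_smul_le (inv_nonneg.2 hs.le) _ _ _
    _ = _ := by rw [hinv]; ring

section Partition

variable {X : Type*} [MeasurableSpace X] {μ : Measure X} {N : ℕ} {x : Fin N → X}
  {P : Fin N → Set X}

lemma norm_inv_smul_sum_sub_integral_le {E : Type*} [NormedAddCommGroup E] [NormedSpace ℝ E]
    [CompleteSpace E]
    (hPmeas : ∀ j, MeasurableSet (P j)) (hPdisj : Pairwise fun j k => Disjoint (P j) (P k))
    (hPcover : (⋃ j, P j) = Set.univ) (hPmass : ∀ j, μ (P j) = (N : ENNReal)⁻¹)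
    {φ : X → E} (hφ : Integrable φ μ) {ε : Fin N → ℝ}
    (hε : ∀ j, ∀ y ∈ P j, ‖φ (x j) - φ y‖ ≤ ε j) :
    ‖(N : ℝ)⁻¹ • ∑ j, φ (x j) - ∫ y, φ y ∂μ‖ ≤ (N : ℝ)⁻¹ * ∑ j, ε j := by
  have hfin : ∀ j, μ (P j) < ⊤ := fun j => by
    rw [hPmass]; exact ENNReal.inv_lt_top.2 (by exact_mod_cast j.pos)
  have hreal : ∀ j, μ.real (P j) = (N : ℝ)⁻¹ := fun j => by simp [measureReal_def, hPmass]
  have hcell : ∀ j,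
      (N : ℝ)⁻¹ • φ (x j) - ∫ y in P j, φ y ∂μ = ∫ y in P j, (φ (x j) - φ y) ∂μ := fun j => by
    rw [integral_sub (integrableOn_const (μ := μ) (s := P j) (C := φ (x j)) (hfin j).ne)
      hφ.integrableOn, setIntegral_const, hreal]
  rw [← setIntegral_univ, ← hPcover,
    integral_iUnion_fintype hPmeas hPdisj fun j => hφ.integrableOn, Finset.smul_sum,
    ← Finset.sum_sub_distrib, Finset.mul_sum]
  refine (norm_sum_le _ _).trans (Finset.sum_le_sum fun j _ => ?_)
  rw [hcell, mul_comm, ← hreal]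
  exact norm_setIntegral_le_of_norm_le_const (hfin j) (hε j)

lemma norm_inv_smul_sum_sub_inv_smul_integral_le {E : Type*} [NormedAddCommGroup E]
    [NormedSpace ℝ E] [CompleteSpace E] [IsProbabilityMeasure μ] (hN : 0 < N)
    (hPmeas : ∀ j, MeasurableSet (P j)) (hPdisj : Pairwise fun j k => Disjoint (P j) (P k))
    (hPcover : (⋃ j, P j) = Set.univ) (hPmass : ∀ j, μ (P j) = (N : ENNReal)⁻¹)
    {w : X → ℝ} {v : X → E} (hw : Integrable w μ) (hwv : Integrable (fun y => w y • v y) μ)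
    {m C δ η : ℝ} (hm : 0 < m) (hwm : ∀ y, m ≤ w y) (hv : ∀ y, ‖v y‖ ≤ C)
    (hδ : ∀ j, ∀ y ∈ P j, |w (x j) - w y| ≤ δ)
    (hη : ∀ j, ∀ y ∈ P j, ‖v (x j) - v y‖ ≤ η) :
    ‖(∑ j, w (x j))⁻¹ • (∑ j, w (x j) • v (x j)) -
        (∫ y, w y ∂μ)⁻¹ • ∫ y, w y • v y ∂μ‖ ≤ η + 2 * δ * C / m := by
  have hN' : (0 : ℝ) < N := by exact_mod_cast hN
  have hC : 0 ≤ C := (norm_nonneg _).trans (hv (x ⟨0, hN⟩))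
  have hδ0 : 0 ≤ δ := by
    obtain ⟨k, hk⟩ := Set.mem_iUnion.1 (hPcover ▸ Set.mem_univ (x ⟨0, hN⟩))
    exact (abs_nonneg _).trans (hδ k _ hk)
  set s := (N : ℝ)⁻¹ * ∑ j, w (x j)
  set t := ∫ y, w y ∂μ
  set b := ∫ y, w y • v y ∂μ
  have hscale : (∑ j, w (x j))⁻¹ • (∑ j, w (x j) • v (x j))
      = s⁻¹ • ((N : ℝ)⁻¹ • ∑ j, w (x j) • v (x j)) := by
    rw [smul_smul, mul_inv_rev, inv_inv, mul_assoc, mul_inv_cancel₀ hN'.ne', mul_one]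
  have hms : m ≤ s := by
    have := Finset.card_nsmul_le_sum Finset.univ (fun j => w (x j)) m fun j _ => hwm _
    rw [Finset.card_univ, Fintype.card_fin, nsmul_eq_mul] at this
    rwa [le_inv_mul_iff₀ hN']
  have hmt : m ≤ t := by
    simpa using integral_mono (integrable_const m) hw hwm
  have hs := hm.trans_le hms
  have ht := hm.trans_le hmt
  have hst : |s - t| ≤ δ := by
    have := norm_inv_smul_sum_sub_integral_le (x := x) hPmeas hPdisj hPcover hPmass hw hδ
    rwa [Finset.sum_const, Finset.card_univ, Fintype.card_fin, nsmul_eq_mul, inv_mul_cancel_left₀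
      hN'.ne'] at this
  have hab : ‖(N : ℝ)⁻¹ • ∑ j, w (x j) • v (x j) - b‖ ≤ s * η + δ * C := by
    refine (norm_inv_smul_sum_sub_integral_le (x := x) hPmeas hPdisj hPcover hPmass hwv
      (ε := fun j => w (x j) * η + δ * C) fun j y hy => ?_).trans_eq ?_
    · refine (norm_smul_sub_smul_le (hm.le.trans (hwm _)) _ _ _).trans ?_
      gcongr
      · exact hm.le.trans (hwm _)
      · exact hη j y hy
      · exact hδ j y hy
      · exact hv y
    · rw [Finset.sum_add_distrib, ← Finset.sum_mul, Finset.sum_const, Finset.card_univ,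
        Fintype.card_fin, nsmul_eq_mul]
      simp only [s]
      field_simp
  have hbt : t⁻¹ * ‖b‖ ≤ C := by
    rw [inv_mul_le_iff₀ ht]
    calc ‖b‖ ≤ ∫ y, w y * C ∂μ := by
          refine norm_integral_le_of_norm_le (hw.mul_const C) (Filter.Eventually.of_forall
            fun y => ?_)
          rw [norm_smul, Real.norm_of_nonneg (hm.le.trans (hwm y))]
          exact mul_le_mul_of_nonneg_left (hv y) (hm.le.trans (hwm y))
      _ = t * C := integral_mul_const C w
  rw [hscale]
  refine (norm_inv_smul_sub_inv_smul_le hs ht _ _).trans ?_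
  calc s⁻¹ * (‖(N : ℝ)⁻¹ • ∑ j, w (x j) • v (x j) - b‖ + |s - t| * (t⁻¹ * ‖b‖))
      ≤ s⁻¹ * (s * η + δ * C + δ * C) := by gcongr
    _ = η + 2 * δ * C / s := by field_simp; ring
    _ ≤ η + 2 * δ * C / m := by gcongr

end Partition

/-- For a Borel probability measure `μ` and a partition `P 1, …, P N` of `X`
into Borel sets with `P j ⊆ closedBall (x j) r` and `μ (P j) = 1/N`, the finite clean
attention output `Φ̄(i)` and the continuous attention output `Φ_M(x i)` satisfy
`‖Φ̄(i) − Φ_M(x i)‖ ≤ (exp(M)·C_V + 2·exp(2M)·B_f²·C_Q·C_K·C_V) · r`. -/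
theorem clean_attention_to_manifold_attention_bound
    {D : ℕ} {X : Type*} [MetricSpace X] [MeasurableSpace X] [BorelSpace X]
    (μ : Measure X) [IsProbabilityMeasure μ]
    (Q K V : EuclideanSpace ℝ (Fin D) →ₗ[ℝ] EuclideanSpace ℝ (Fin D))
    (C_Q C_K C_V B_f r : ℝ)
    (hCQ : 0 < C_Q) (hCK : 0 < C_K) (hCV : 0 < C_V) (hBf : 0 < B_f) (hr : 0 < r)
    (hQ : ∀ u, ‖Q u‖ ≤ C_Q * ‖u‖) (hK : ∀ u, ‖K u‖ ≤ C_K * ‖u‖)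
    (hV : ∀ u, ‖V u‖ ≤ C_V * ‖u‖)
    (f : X → EuclideanSpace ℝ (Fin D))
    (hfLip : ∀ a b, ‖f a - f b‖ ≤ dist a b)
    (hfB : ∀ x, ‖f x‖ ≤ B_f)
    (N : ℕ) (x : Fin N → X) (P : Fin N → Set X)
    (hPmeas : ∀ j, MeasurableSet (P j))
    (hPdisj : Pairwise fun j k => Disjoint (P j) (P k))
    (hPcover : (⋃ j, P j) = Set.univ)
    (hPball : ∀ j, P j ⊆ Metric.closedBall (x j) r)
    (hPmass : ∀ j, μ (P j) = (N : ENNReal)⁻¹)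
    (M : ℝ) (hM0 : 0 ≤ M)
    (hM : ∀ u v : X, abs ⟪Q (f u), K (f v)⟫ ≤ M)
    (i : Fin N) :
    ‖(∑ j, Real.exp ⟪Q (f (x i)), K (f (x j))⟫)⁻¹ •
        (∑ j, Real.exp ⟪Q (f (x i)), K (f (x j))⟫ • V (f (x j))) -
      (∫ y, Real.exp ⟪Q (f (x i)), K (f y)⟫ ∂μ)⁻¹ •
        (∫ y, Real.exp ⟪Q (f (x i)), K (f y)⟫ • V (f y) ∂μ)‖
      ≤ (Real.exp M * C_V + 2 * Real.exp (2 * M) * B_f ^ 2 * C_Q * C_K * C_V) * r := by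
  set g : X → ℝ := fun y => Real.exp ⟪Q (f (x i)), K (f y)⟫
  have hf : Continuous f := (LipschitzWith.of_dist_le_mul (K := 1) fun a b => by
    simpa [dist_eq_norm] using hfLip a b).continuous
  have hKc := K.continuous_of_finiteDimensional
  have hVc := V.continuous_of_finiteDimensional
  have hg : ∀ y, 0 < g y ∧ g y ≤ Real.exp M :=
    fun y => ⟨Real.exp_pos _, Real.exp_le_exp.2 (le_of_abs_le (hM _ _))⟩
  have hVf : ∀ y, ‖V (f y)‖ ≤ C_V * B_f := fun y => (hV _).trans (by gcongr; exact hfB y)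
  have hcell : ∀ j, ∀ y ∈ P j, ‖f (x j) - f y‖ ≤ r := fun j y hy =>
    (hfLip _ _).trans (by rw [dist_comm]; exact hPball j hy)
  have hscore : ∀ j, ∀ y ∈ P j, |g (x j) - g y| ≤ Real.exp M * (C_Q * B_f * (C_K * r)) := by
    intro j y hy
    refine (abs_exp_inner_sub_exp_inner_le (hM _ _) (hM _ _)).trans ?_
    rw [← map_sub]
    gcongr
    · exact (hQ _).trans (by gcongr; exact hfB _)
    · exact (hK _).trans (by gcongr; exact hcell j y hy)
  have hvalue : ∀ j, ∀ y ∈ P j, ‖V (f (x j)) - V (f y)‖ ≤ C_V * r := fun j y hy => by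
    rw [← map_sub]; exact (hV _).trans (by gcongr; exact hcell j y hy)
  have hgint : Integrable g μ :=
    Integrable.of_bound (by fun_prop : Continuous g).aestronglyMeasurable (Real.exp M)
      (ae_of_all _ fun y => by rw [Real.norm_of_nonneg (hg y).1.le]; exact (hg y).2)
  have hgVint : Integrable (fun y => g y • V (f y)) μ :=
    Integrable.of_bound (by fun_prop : Continuous _).aestronglyMeasurable _ (ae_of_all _ fun y => by
      rw [norm_smul, Real.norm_of_nonneg (hg y).1.le]
      exact mul_le_mul (hg y).2 (hVf y) (norm_nonneg _) (Real.exp_pos M).le)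
  refine (norm_inv_smul_sum_sub_inv_smul_integral_le i.pos hPmeas hPdisj hPcover hPmass hgint
    hgVint (Real.exp_pos (-M)) (fun y => Real.exp_le_exp.2 (neg_le_of_abs_le (hM _ _))) hVf
    hscore hvalue).trans ?_
  have hexp : Real.exp (2 * M) = Real.exp M * Real.exp M := by rw [two_mul, Real.exp_add]
  calc C_V * r + 2 * (Real.exp M * (C_Q * B_f * (C_K * r))) * (C_V * B_f) / Real.exp (-M)
      = C_V * r + 2 * Real.exp (2 * M) * B_f ^ 2 * C_Q * C_K * C_V * r := by
        rw [Real.exp_neg, div_inv_eq_mul, hexp]; ring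
    _ ≤ _ := by
        rw [add_mul]
        gcongr
        exact le_mul_of_one_le_left hCV.le (Real.one_le_exp hM0)
end

section
/- (Deterministic form of the paper's Corollary 3.4, convergence of the sparse graph transformer to a restricted manifold transformer.) Let μ be a Borel probability measure on X, let x_1, …, x_N ∈ X, and let V_1, …, V_N be pairwise disjoint Borel sets whose union is X, with V_j contained in the closed ball of radius r > 0 centered at x_j and μ(V_j) = 1/N for every j. Assume ‖f(x)‖ ≤ 1 for all x ∈ X, let X_1, …, X_N ∈ ℝ^D satisfy ‖X_j − f(x_j)‖ ≤ Δ and ‖X_j‖ ≤ 1 for all j, and let M ≥ 0 satisfy |⟨Q X_i, K X_j⟩| ≤ M for all i, j and |⟨Q f(u), K f(v)⟩| ≤ M for all u, v ∈ X. Fix an index i and a nonempty subset S ⊆ {1, …, N}, and set A = ⋃_{j ∈ S} V_j. Define the sparse attention output Φ̇_G(i) = (Σ_{j ∈ S} exp(⟨Q X_i, K X_j⟩) V X_j) / (Σ_{j ∈ S} exp(⟨Q X_i, K X_j⟩)) and the restricted manifold-transformer output Φ̇_M(x_i) = (∫_A exp(⟨Q f(x_i), K f(y)⟩) V f(y) dμ(y))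 / (∫_A exp(⟨Q f(x_i), K f(y)⟩) dμ(y)). Then ‖Φ̇_G(i) − Φ̇_M(x_i)‖ ≤ (C_V + 4·exp(2M)·C_Q·C_K·C_V)·Δ + (exp(M)·C_V + 2·exp(2M)·C_Q·C_K·C_V)·r. -/
/-!
Both outputs are weighted averages of values of `V`. Splitting `A` into the cells `P j`, the
manifold output is the average of the `V (Xv j)` with weights `∫_{P j} exp ⟪Q f(x_i), K f(y)⟫ dμ`,
up to an error `C_V (Δ + r)` from replacing `V (f y)` by `V (Xv j)` inside each cell.
On a cell the exponents of the two weights differ by at most `C_Q C_K (2Δ + r)`; since `exp` is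
`e^M`-Lipschitz below `M` while the graph weights are at least `e^{-M}`, the cell weights are the
graph weights scaled by `μ(P j) = 1/N` up to a relative error `η = e^{2M} C_Q C_K (2Δ + r)`.
Such a reweighting moves an average of vectors of norm `≤ C_V` by at most `2 η C_V`.
-/

open MeasureTheory Finset
open scoped RealInnerProductSpace BigOperators

namespace Real

theorem abs_exp_sub_exp_le_exp_mul_abs_sub {s t M : ℝ} (hs : s ≤ M) (ht : t ≤ M) :
    |exp s - exp t| ≤ exp M * |s - t| := by
  wlog hst : s ≤ t generalizing s t
  · rw [abs_sub_comm, abs_sub_comm s]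
    exact this ht hs (le_of_not_ge hst)
  rw [abs_sub_comm, abs_of_nonneg (sub_nonneg.2 (exp_le_exp.2 hst)), abs_sub_comm,
    abs_of_nonneg (sub_nonneg.2 hst)]
  calc exp t - exp s = exp t * (1 - exp (s - t)) := by
        rw [mul_sub, mul_one, ← exp_add]; ring_nf
    _ ≤ exp t * (t - s) :=
        mul_le_mul_of_nonneg_left (by linarith [add_one_le_exp (s - t)]) (exp_pos t).le
    _ ≤ exp M * (t - s) := by gcongr

end Real

theorem abs_inner_map_sub_inner_map_le {E F : Type*} [SeminormedAddCommGroup E]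
    [NormedSpace ℝ E] [NormedAddCommGroup F] [InnerProductSpace ℝ F] {Q K : E →ₗ[ℝ] F} {C_Q C_K : ℝ}
    (hQ : ∀ u, ‖Q u‖ ≤ C_Q * ‖u‖) (hK : ∀ v, ‖K v‖ ≤ C_K * ‖v‖) (u u' v v' : E) :
    |⟪Q u, K v⟫ - ⟪Q u', K v'⟫| ≤ C_Q * C_K * (‖u - u'‖ * ‖v‖ + ‖u'‖ * ‖v - v'‖) := by
  have hbilin : ∀ p q, |⟪Q p, K q⟫| ≤ C_Q * C_K * (‖p‖ * ‖q‖) := fun p q => calc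
    |⟪Q p, K q⟫| ≤ ‖Q p‖ * ‖K q‖ := abs_real_inner_le_norm _ _
    _ ≤ (C_Q * ‖p‖) * (C_K * ‖q‖) :=
        mul_le_mul (hQ p) (hK q) (norm_nonneg _) ((norm_nonneg _).trans (hQ p))
    _ = C_Q * C_K * (‖p‖ * ‖q‖) := by ring
  have hsplit : ⟪Q u, K v⟫ - ⟪Q u', K v'⟫ = ⟪Q (u - u'), K v⟫ + ⟪Q u', K (v - v')⟫ := by
    simp only [map_sub, inner_sub_left, inner_sub_right]; ring
  rw [hsplit, mul_add]
  exact (abs_add_le _ _).trans (add_le_add (hbilin _ _) (hbilin _ _))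

theorem abs_exp_inner_map_sub_exp_inner_map_le {E F : Type*} [SeminormedAddCommGroup E]
    [NormedSpace ℝ E] [NormedAddCommGroup F] [InnerProductSpace ℝ F] {Q K : E →ₗ[ℝ] F}
    {C_Q C_K M : ℝ} (hQ : ∀ u, ‖Q u‖ ≤ C_Q * ‖u‖) (hK : ∀ v, ‖K v‖ ≤ C_K * ‖v‖) {u u' v v' : E}
    (huv : |⟪Q u, K v⟫| ≤ M) (hu'v' : ⟪Q u', K v'⟫ ≤ M) :
    |Real.exp ⟪Q u, K v⟫ - Real.exp ⟪Q u', K v'⟫| ≤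
      Real.exp M * (Real.exp M * (C_Q * C_K * (‖u - u'‖ * ‖v‖ + ‖u'‖ * ‖v - v'‖))) *
        Real.exp ⟪Q u, K v⟫ := by
  have hinner := abs_inner_map_sub_inner_map_le hQ hK u u' v v'
  have hlip := Real.abs_exp_sub_exp_le_exp_mul_abs_sub (le_of_abs_le huv) hu'v'
  have hlow : 1 ≤ Real.exp M * Real.exp ⟪Q u, K v⟫ := by
    rw [← Real.exp_add]
    exact Real.one_le_exp (by linarith [neg_abs_le ⟪Q u, K v⟫])
  calc _ ≤ Real.exp M * (C_Q * C_K * (‖u - u'‖ * ‖v‖ + ‖u'‖ * ‖v - v'‖)) :=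
        hlip.trans (mul_le_mul_of_nonneg_left hinner (Real.exp_pos M).le)
    _ ≤ Real.exp M * (C_Q * C_K * (‖u - u'‖ * ‖v‖ + ‖u'‖ * ‖v - v'‖)) *
          (Real.exp M * Real.exp ⟪Q u, K v⟫) :=
        le_mul_of_one_le_right
          (mul_nonneg (Real.exp_pos M).le ((abs_nonneg _).trans hinner)) hlow
    _ = _ := by ring

section WeightedSum

variable {ι E : Type*} [NormedAddCommGroup E] [NormedSpace ℝ E] {s : Finset ι}

theorem inv_sum_mul_smul_sum_mul_smul {t : ℝ} (ht : t ≠ 0) (a : ι → ℝ) (b : ι → E) :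
    (∑ j ∈ s, t * a j)⁻¹ • ∑ j ∈ s, (t * a j) • b j =
      (∑ j ∈ s, a j)⁻¹ • ∑ j ∈ s, a j • b j := by
  simp_rw [← mul_sum, mul_smul, ← smul_sum, smul_smul]
  rw [mul_inv_rev, mul_assoc, inv_mul_cancel₀ ht, mul_one]

theorem sum_abs_div_sum_sub_div_sum_le {a c : ι → ℝ} (ha : 0 < ∑ j ∈ s, a j)
    (hc : ∀ j ∈ s, 0 ≤ c j) (hc' : 0 < ∑ j ∈ s, c j) :
    ∑ j ∈ s, |a j / ∑ k ∈ s, a k - c j / ∑ k ∈ s, c k| ≤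
      2 * (∑ j ∈ s, |a j - c j|) / ∑ j ∈ s, a j := by
  set α := ∑ k ∈ s, a k
  set γ := ∑ k ∈ s, c k
  have hγα : |γ - α| ≤ ∑ j ∈ s, |a j - c j| := by
    rw [← sum_sub_distrib]
    exact (abs_sum_le_sum_abs _ _).trans_eq (sum_congr rfl fun j _ => abs_sub_comm _ _)
  have hterm : ∀ j ∈ s, |a j / α - c j / γ| ≤ |a j - c j| / α + c j * |γ - α| / (α * γ) := by
    intro j hj
    have h : a j / α - c j / γ = (a j - c j) / α + c j * (γ - α) / (α * γ) := by
      field_simp; ring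
    rw [h]
    refine (abs_add_le _ _).trans_eq ?_
    rw [abs_div, abs_of_pos ha, abs_div, abs_mul, abs_of_nonneg (hc j hj),
      abs_of_pos (mul_pos ha hc')]
  calc ∑ j ∈ s, |a j / α - c j / γ|
      ≤ ∑ j ∈ s, (|a j - c j| / α + c j * |γ - α| / (α * γ)) := sum_le_sum hterm
    _ = (∑ j ∈ s, |a j - c j|) / α + |γ - α| / α := by
        rw [sum_add_distrib, ← sum_div, ← sum_div, ← sum_mul]
        field_simp
        ring
    _ ≤ 2 * (∑ j ∈ s, |a j - c j|) / α := by
        rw [← add_div]; gcongr; linarith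

theorem norm_inv_sum_smul_sub_inv_sum_smul_le {a c : ι → ℝ} {b : ι → E} {η B : ℝ}
    (ha : 0 < ∑ j ∈ s, a j) (hc : ∀ j ∈ s, 0 ≤ c j) (hc' : 0 < ∑ j ∈ s, c j)
    (hac : ∀ j ∈ s, |a j - c j| ≤ η * a j) (hb : ∀ j ∈ s, ‖b j‖ ≤ B) :
    ‖(∑ j ∈ s, a j)⁻¹ • ∑ j ∈ s, a j • b j - (∑ j ∈ s, c j)⁻¹ • ∑ j ∈ s, c j • b j‖ ≤
      2 * η * B := by
  obtain ⟨j₀, hj₀⟩ := nonempty_of_sum_ne_zero ha.ne'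
  have hB : 0 ≤ B := (norm_nonneg _).trans (hb j₀ hj₀)
  have hsum : ∑ j ∈ s, |a j - c j| ≤ η * ∑ j ∈ s, a j := by
    rw [mul_sum]; exact sum_le_sum hac
  have hdiff : (∑ j ∈ s, a j)⁻¹ • ∑ j ∈ s, a j • b j - (∑ j ∈ s, c j)⁻¹ • ∑ j ∈ s, c j • b j
      = ∑ j ∈ s, (a j / ∑ k ∈ s, a k - c j / ∑ k ∈ s, c k) • b j := by
    simp only [smul_sum, smul_smul, ← sum_sub_distrib, sub_smul, div_eq_inv_mul]
  rw [hdiff]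
  calc ‖∑ j ∈ s, (a j / ∑ k ∈ s, a k - c j / ∑ k ∈ s, c k) • b j‖
      ≤ ∑ j ∈ s, |a j / ∑ k ∈ s, a k - c j / ∑ k ∈ s, c k| * B := by
        refine (norm_sum_le _ _).trans (sum_le_sum fun j hj => ?_)
        rw [norm_smul, Real.norm_eq_abs]
        exact mul_le_mul_of_nonneg_left (hb j hj) (abs_nonneg _)
    _ ≤ (2 * (∑ j ∈ s, |a j - c j|) / ∑ j ∈ s, a j) * B := by
        rw [← sum_mul]; gcongr; exact sum_abs_div_sum_sub_div_sum_le ha hc hc'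
    _ ≤ 2 * η * B := by
        gcongr
        rw [div_le_iff₀ ha]; linarith

theorem norm_inv_sum_smul_sum_le {c : ι → ℝ} {v : ι → E} {δ : ℝ} (hc : 0 < ∑ j ∈ s, c j)
    (hv : ∀ j ∈ s, ‖v j‖ ≤ δ * c j) : ‖(∑ j ∈ s, c j)⁻¹ • ∑ j ∈ s, v j‖ ≤ δ := by
  rw [norm_smul, norm_inv, Real.norm_of_nonneg hc.le, inv_mul_le_iff₀ hc, mul_comm, mul_sum]
  exact (norm_sum_le _ _).trans (sum_le_sum hv)

end WeightedSum

section SetIntegral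

variable {α E : Type*} [MeasurableSpace α] {μ : Measure α} {s : Set α}
  [NormedAddCommGroup E] [NormedSpace ℝ E]

theorem abs_mul_measureReal_sub_setIntegral_le (hs : μ s < ⊤) {g : α → ℝ} {a ε : ℝ}
    (hg : IntegrableOn g s μ) (hag : ∀ y ∈ s, |a - g y| ≤ ε) :
    |a * μ.real s - ∫ y in s, g y ∂μ| ≤ ε * μ.real s := by
  have h : a * μ.real s - ∫ y in s, g y ∂μ = ∫ y in s, (a - g y) ∂μ := by
    rw [integral_sub (integrableOn_const (C := a) hs.ne) hg, setIntegral_const, smul_eq_mul,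
      mul_comm]
  rw [h]
  exact norm_setIntegral_le_of_norm_le_const hs fun y hy =>
    (Real.norm_eq_abs _).trans_le (hag y hy)

theorem norm_setIntegral_smul_sub_setIntegral_smul_le [CompleteSpace E] (hs : MeasurableSet s)
    {g : α → ℝ} {h : α → E} {b : E} {δ : ℝ} (hg : IntegrableOn g s μ)
    (hgh : IntegrableOn (fun y => g y • h y) s μ) (hg0 : ∀ y ∈ s, 0 ≤ g y)
    (hbh : ∀ y ∈ s, ‖b - h y‖ ≤ δ) :
    ‖(∫ y in s, g y ∂μ) • b - ∫ y in s, g y • h y ∂μ‖ ≤ δ * ∫ y in s, g y ∂μ := by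
  have h : (∫ y in s, g y ∂μ) • b - ∫ y in s, g y • h y ∂μ = ∫ y in s, g y • (b - h y) ∂μ := by
    simp_rw [smul_sub]
    rw [integral_sub (hg.smul_const b) hgh, integral_smul_const]
  rw [h, ← integral_const_mul]
  refine norm_integral_le_of_norm_le (hg.const_mul δ)
    (ae_restrict_of_forall_mem hs fun y hy => ?_)
  rw [norm_smul, Real.norm_of_nonneg (hg0 y hy), mul_comm]
  exact mul_le_mul_of_nonneg_right (hbh y hy) (hg0 y hy)

theorem setIntegral_pos_of_forall_mem_pos (hs : MeasurableSet s) (hμs : 0 < μ s) {g : α → ℝ}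
    (hg : IntegrableOn g s μ) (hpos : ∀ y ∈ s, 0 < g y) : 0 < ∫ y in s, g y ∂μ := by
  rw [setIntegral_pos_iff_support_of_nonneg_ae
    (ae_restrict_of_forall_mem hs fun y hy => (hpos y hy).le) hg]
  exact hμs.trans_le (measure_mono fun y hy => ⟨(hpos y hy).ne', hy⟩)

end SetIntegral

theorem norm_inv_sum_smul_sub_inv_setIntegral_biUnion_smul_le {ι α E : Type*}
    [MeasurableSpace α] [NormedAddCommGroup E] [NormedSpace ℝ E] [CompleteSpace E]
    {μ : Measure α} {S : Finset ι} {P : ι → Set α} {m : ℝ}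
    (hPmeas : ∀ j ∈ S, MeasurableSet (P j))
    (hPdisj : (S : Set ι).Pairwise fun j k => Disjoint (P j) (P k))
    (hm : 0 < m) (hPmass : ∀ j ∈ S, μ.real (P j) = m)
    {a : ι → ℝ} {g : α → ℝ} {b : ι → E} {h : α → E} {η B δ : ℝ}
    (ha : 0 < ∑ j ∈ S, a j) (hg : ∀ j ∈ S, ∀ y ∈ P j, 0 < g y)
    (hg_int : ∀ j ∈ S, IntegrableOn g (P j) μ)
    (hgh_int : ∀ j ∈ S, IntegrableOn (fun y => g y • h y) (P j) μ)
    (hag : ∀ j ∈ S, ∀ y ∈ P j, |a j - g y| ≤ η * a j)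
    (hb : ∀ j ∈ S, ‖b j‖ ≤ B) (hbh : ∀ j ∈ S, ∀ y ∈ P j, ‖b j - h y‖ ≤ δ) :
    ‖(∑ j ∈ S, a j)⁻¹ • ∑ j ∈ S, a j • b j -
        (∫ y in ⋃ j ∈ S, P j, g y ∂μ)⁻¹ • ∫ y in ⋃ j ∈ S, P j, g y • h y ∂μ‖ ≤
      2 * η * B + δ := by
  have hPμ : ∀ j ∈ S, 0 < μ (P j) ∧ μ (P j) < ⊤ := fun j hj =>
    ENNReal.toReal_pos_iff.1 (hm.trans_eq (hPmass j hj).symm)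
  set c : ι → ℝ := fun j => ∫ y in P j, g y ∂μ
  have hc : ∀ j ∈ S, 0 < c j := fun j hj =>
    setIntegral_pos_of_forall_mem_pos (hPmeas j hj) (hPμ j hj).1 (hg_int j hj) (hg j hj)
  have hc_sum : 0 < ∑ j ∈ S, c j := sum_pos hc (nonempty_of_sum_ne_zero ha.ne')
  have hrel : ∀ j ∈ S, |m * a j - c j| ≤ η * (m * a j) := fun j hj => by
    have hcell := abs_mul_measureReal_sub_setIntegral_le (hPμ j hj).2 (hg_int j hj) (hag j hj)
    rwa [hPmass j hj, mul_comm, mul_assoc, mul_comm (a j)] at hcell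
  rw [integral_biUnion_finset S hPmeas hPdisj hg_int,
    integral_biUnion_finset S hPmeas hPdisj hgh_int, ← inv_sum_mul_smul_sum_mul_smul hm.ne' a b]
  calc _ = ‖((∑ j ∈ S, m * a j)⁻¹ • ∑ j ∈ S, (m * a j) • b j -
          (∑ j ∈ S, c j)⁻¹ • ∑ j ∈ S, c j • b j) +
        (∑ j ∈ S, c j)⁻¹ • ∑ j ∈ S, (c j • b j - ∫ y in P j, g y • h y ∂μ)‖ := by
        rw [sum_sub_distrib, smul_sub, sub_add_sub_cancel]
    _ ≤ 2 * η * B + δ := norm_add_le_of_le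
        (norm_inv_sum_smul_sub_inv_sum_smul_le (by rw [← mul_sum]; positivity)
          (fun j hj => (hc j hj).le) hc_sum hrel hb)
        (norm_inv_sum_smul_sum_le hc_sum fun j hj =>
          norm_setIntegral_smul_sub_setIntegral_smul_le (hPmeas j hj) (hg_int j hj)
            (hgh_int j hj) (fun y hy => (hg j hj y hy).le) (hbh j hj))

theorem sparse_graph_transformer_to_restricted_manifold_transformer_bound_general
    {D : ℕ} {X : Type*} [MetricSpace X] [MeasurableSpace X] [BorelSpace X]
    (μ : Measure X)
    (Q K V : EuclideanSpace ℝ (Fin D) →ₗ[ℝ] EuclideanSpace ℝ (Fin D))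
    (C_Q C_K C_V Δ r : ℝ)
    (hCQ : 0 < C_Q) (hCK : 0 < C_K) (hCV : 0 < C_V) (hΔ : 0 ≤ Δ) (hr : 0 < r)
    (hQ : ∀ u, ‖Q u‖ ≤ C_Q * ‖u‖) (hK : ∀ u, ‖K u‖ ≤ C_K * ‖u‖)
    (hV : ∀ u, ‖V u‖ ≤ C_V * ‖u‖)
    (f : X → EuclideanSpace ℝ (Fin D))
    (hfLip : ∀ a b, ‖f a - f b‖ ≤ dist a b)
    (hf1 : ∀ a : X, ‖f a‖ ≤ 1)
    (N : ℕ) (x : Fin N → X) (P : Fin N → Set X)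
    (hPmeas : ∀ j, MeasurableSet (P j))
    (hPdisj : Pairwise fun j k => Disjoint (P j) (P k))
    (hPball : ∀ j, P j ⊆ Metric.closedBall (x j) r)
    (hPmass : ∀ j, μ (P j) = (N : ENNReal)⁻¹)
    (Xv : Fin N → EuclideanSpace ℝ (Fin D))
    (hXv : ∀ j, ‖Xv j - f (x j)‖ ≤ Δ) (hXv1 : ∀ j, ‖Xv j‖ ≤ 1)
    (M : ℝ) (hM0 : 0 ≤ M)
    (hM1 : ∀ i j, abs ⟪Q (Xv i), K (Xv j)⟫ ≤ M)
    (hM2 : ∀ u v : X, abs ⟪Q (f u), K (f v)⟫ ≤ M)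
    (i : Fin N) (S : Finset (Fin N)) (hS : S.Nonempty)
    (A : Set X) (hA : A = ⋃ j ∈ S, P j) :
    ‖(∑ j ∈ S, Real.exp ⟪Q (Xv i), K (Xv j)⟫)⁻¹ •
        (∑ j ∈ S, Real.exp ⟪Q (Xv i), K (Xv j)⟫ • V (Xv j)) -
      (∫ y in A, Real.exp ⟪Q (f (x i)), K (f y)⟫ ∂μ)⁻¹ •
        (∫ y in A, Real.exp ⟪Q (f (x i)), K (f y)⟫ • V (f y) ∂μ)‖
      ≤ (C_V + 4 * Real.exp (2 * M) * C_Q * C_K * C_V) * Δ +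
        (Real.exp M * C_V + 2 * Real.exp (2 * M) * C_Q * C_K * C_V) * r := by
  set g : X → ℝ := fun y => Real.exp ⟪Q (f (x i)), K (f y)⟫
  have hPfin : ∀ j, μ (P j) ≠ ⊤ := fun j => by simp [hPmass, i.pos.ne']
  have hf : Continuous f := (LipschitzWith.of_dist_le_mul (K := 1) fun a b => by
    simpa [dist_eq_norm] using hfLip a b).continuous
  have hg : Continuous g := by
    have := K.continuous_of_finiteDimensional
    fun_prop
  have hg_le : ∀ y, ‖g y‖ ≤ Real.exp M := fun y => by
    rw [Real.norm_of_nonneg (Real.exp_pos _).le]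
    exact Real.exp_le_exp.2 (le_of_abs_le (hM2 _ _))
  have hg_int : ∀ j, IntegrableOn g (P j) μ := fun j =>
    Measure.integrableOn_of_bounded (hPfin j) hg.aestronglyMeasurable (ae_of_all _ hg_le)
  have hV_le : ∀ u, ‖u‖ ≤ 1 → ‖V u‖ ≤ C_V := fun u hu =>
    (hV u).trans (mul_le_of_le_one_right hCV.le hu)
  have hcell : ∀ j, ∀ y ∈ P j, ‖Xv j - f y‖ ≤ Δ + r := fun j y hy => calc
    ‖Xv j - f y‖ ≤ ‖Xv j - f (x j)‖ + ‖f (x j) - f y‖ :=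
        norm_sub_le_norm_sub_add_norm_sub _ _ _
    _ ≤ Δ + r := add_le_add (hXv j)
        ((hfLip _ _).trans (by rw [dist_comm]; exact Metric.mem_closedBall.1 (hPball j hy)))
  set η := Real.exp M * (Real.exp M * (C_Q * C_K * (2 * Δ + r))) with hη
  have hweight : ∀ j ∈ S, ∀ y ∈ P j,
      |Real.exp ⟪Q (Xv i), K (Xv j)⟫ - g y| ≤ η * Real.exp ⟪Q (Xv i), K (Xv j)⟫ := by
    intro j _ y hy
    refine (abs_exp_inner_map_sub_exp_inner_map_le hQ hK (hM1 i j)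
      (le_of_abs_le (hM2 _ _))).trans ?_
    have h₁ := mul_le_mul (hXv i) (hXv1 j) (norm_nonneg _) hΔ
    have h₂ := mul_le_mul (hf1 (x i)) (hcell j y hy) (norm_nonneg _) zero_le_one
    rw [hη]
    gcongr Real.exp M * (Real.exp M * (C_Q * C_K * ?_)) * _
    linarith
  have hbound := norm_inv_sum_smul_sub_inv_setIntegral_biUnion_smul_le (μ := μ)
    (h := fun y => V (f y))
    (fun j _ => hPmeas j) (hPdisj.set_pairwise _) (inv_pos.2 (Nat.cast_pos.2 i.pos))
    (fun j _ => by simp [measureReal_def, hPmass])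
    (sum_pos (fun j _ => Real.exp_pos _) hS) (fun j _ y _ => Real.exp_pos _)
    (fun j _ => hg_int j)
    (fun j _ => (hg_int j).smul_bdd C_V
      (V.continuous_of_finiteDimensional.comp hf).aestronglyMeasurable
      (ae_of_all _ fun y => hV_le _ (hf1 y)))
    hweight (fun j _ => hV_le _ (hXv1 j))
    (fun j _ y hy => by
      rw [← map_sub]; exact (hV _).trans (mul_le_mul_of_nonneg_left (hcell j y hy) hCV.le))
  rw [hA]
  calc _ ≤ 2 * η * C_V + C_V * (Δ + r) := hbound
    _ = (C_V + 4 * Real.exp (2 * M) * C_Q * C_K * C_V) * Δ +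
        (C_V + 2 * Real.exp (2 * M) * C_Q * C_K * C_V) * r := by
      rw [two_mul M, Real.exp_add]; ring
    _ ≤ _ := by gcongr; exact le_mul_of_one_le_left hCV.le (Real.one_le_exp hM0)

/-- deterministic form of Corollary 3.4: convergence of the sparse graph
transformer to a restricted manifold transformer. For a nonempty index subset
`S ⊆ {1, …, N}` with `A = ⋃_{j ∈ S} P j`, the sparse attention output and the restricted
manifold-transformer output satisfy
`‖Φ̇_G(i) − Φ̇_M(x i)‖ ≤ (C_V + 4·exp(2M)·C_Q·C_K·C_V)·Δ
                         + (exp(M)·C_V + 2·exp(2M)·C_Q·C_K·C_V)·r`. -/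
theorem sparse_graph_transformer_to_restricted_manifold_transformer_bound
    {D : ℕ} {X : Type*} [MetricSpace X] [MeasurableSpace X] [BorelSpace X]
    (μ : Measure X) [IsProbabilityMeasure μ]
    (Q K V : EuclideanSpace ℝ (Fin D) →ₗ[ℝ] EuclideanSpace ℝ (Fin D))
    (C_Q C_K C_V Δ r : ℝ)
    (hCQ : 0 < C_Q) (hCK : 0 < C_K) (hCV : 0 < C_V) (hΔ : 0 ≤ Δ) (hr : 0 < r)
    (hQ : ∀ u, ‖Q u‖ ≤ C_Q * ‖u‖) (hK : ∀ u, ‖K u‖ ≤ C_K * ‖u‖)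
    (hV : ∀ u, ‖V u‖ ≤ C_V * ‖u‖)
    (f : X → EuclideanSpace ℝ (Fin D))
    (hfLip : ∀ a b, ‖f a - f b‖ ≤ dist a b)
    (hf1 : ∀ a : X, ‖f a‖ ≤ 1)
    (N : ℕ) (x : Fin N → X) (P : Fin N → Set X)
    (hPmeas : ∀ j, MeasurableSet (P j))
    (hPdisj : Pairwise fun j k => Disjoint (P j) (P k))
    (hPcover : (⋃ j, P j) = Set.univ)
    (hPball : ∀ j, P j ⊆ Metric.closedBall (x j) r)
    (hPmass : ∀ j, μ (P j) = (N : ENNReal)⁻¹)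
    (Xv : Fin N → EuclideanSpace ℝ (Fin D))
    (hXv : ∀ j, ‖Xv j - f (x j)‖ ≤ Δ) (hXv1 : ∀ j, ‖Xv j‖ ≤ 1)
    (M : ℝ) (hM0 : 0 ≤ M)
    (hM1 : ∀ i j, abs ⟪Q (Xv i), K (Xv j)⟫ ≤ M)
    (hM2 : ∀ u v : X, abs ⟪Q (f u), K (f v)⟫ ≤ M)
    (i : Fin N) (S : Finset (Fin N)) (hS : S.Nonempty)
    (A : Set X) (hA : A = ⋃ j ∈ S, P j) :
    ‖(∑ j ∈ S, Real.exp ⟪Q (Xv i), K (Xv j)⟫)⁻¹ •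
        (∑ j ∈ S, Real.exp ⟪Q (Xv i), K (Xv j)⟫ • V (Xv j)) -
      (∫ y in A, Real.exp ⟪Q (f (x i)), K (f y)⟫ ∂μ)⁻¹ •
        (∫ y in A, Real.exp ⟪Q (f (x i)), K (f y)⟫ • V (f y) ∂μ)‖
      ≤ (C_V + 4 * Real.exp (2 * M) * C_Q * C_K * C_V) * Δ +
        (Real.exp M * C_V + 2 * Real.exp (2 * M) * C_Q * C_K * C_V) * r :=
  sparse_graph_transformer_to_restricted_manifold_transformer_bound_general μ Q K V C_Q C_K C_V Δ r
    hCQ hCK hCV hΔ hr hQ hK hV f hfLip hf1 N x P hPmeas hPdisj hPball hPmass Xv hXv hXv1 M hM0 hM1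
    hM2 i S hS A hA
end
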